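/- arXiv:2010.08544 — 2 statements merged into one kernel-verified Lean document; each statement's English description precedes it below -/
import Mathlib

section
/- Let (X, d, μ) be a metric probability space with concentration function α, let L be a countable label set, and let h : X → L be a measurable classifier. Let η ∈ (0, 1/2] be such that μ(h⁻¹{l}) ≤ 1 − η for every l ∈ L, let γ ∈ (0, 1], and let ε₁, ε₂ > 0 satisfy α(ε₁) < η/2 and α(ε₂) < γ/2. Then the prediction-change adversarial risk satisfies R^{PC}_{ε₁+ε₂}(h, μ) > 1 − γ. -/
/-!
Split the labels into two groups `t` and `tᶜ`, each of mass at least `η / 2 > α(ε₁)`; this is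
possible because no class has mass above `1 - η`. Concentration at `ε₁` expands each group to
mass at least `1 / 2`, and concentration at `ε₂` then to mass at least `1 - α(ε₂) > 1 - γ / 2`.
The two `(ε₁ + ε₂)`-expansions therefore overlap in mass more than `1 - γ`, and every point of the
overlap is within `ε₁ + ε₂` of a point of the other group, i.e. of a differently labelled point.
-/

open MeasureTheory Metric Finset
open scoped ComplexOrder

noncomputable section

/-- Concentration function of a metric probability space:
`α(ε) = 1 - inf {μ(A_ε) : A Borel, μ(A) ≥ 1/2}`, where `A_ε` is the `ε`-expansion
`{x : dist(x, A) ≤ ε}` (realized as `Metric.cthickening`). -/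
def concFn {X : Type*} [PseudoEMetricSpace X] [MeasurableSpace X] (μ : Measure X) (ε : ℝ) : ℝ :=
  1 - sInf {r : ℝ | ∃ A : Set X, MeasurableSet A ∧ 1/2 ≤ μ A ∧
    r = (μ (Metric.cthickening ε A)).toReal}

/-- The set of samples whose distance to the nearest differently-labeled sample is at
most `ε`; its measure is the prediction-change adversarial risk `R^{PC}_ε(h, μ)`. -/
def pcSet {X L : Type*} [PseudoMetricSpace X] (h : X → L) (ε : ℝ) : Set X :=
  {x | sInf {r : ℝ | ∃ x', h x' ≠ h x ∧ r = dist x x'} ≤ ε}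

open scoped ENNReal Topology

section Concentration

variable {X : Type*} [PseudoEMetricSpace X]

lemma one_sub_concFn_le_measureReal_cthickening [MeasurableSpace X] {μ : Measure X} (ε : ℝ)
    {s : Set X} (hs : MeasurableSet s) (hs_half : 1 / 2 ≤ μ s) :
    1 - concFn μ ε ≤ μ.real (cthickening ε s) := by
  rw [concFn, sub_sub_cancel]
  exact csInf_le ⟨0, by rintro _ ⟨t, -, -, rfl⟩; exact ENNReal.toReal_nonneg⟩ ⟨s, hs, hs_half, rfl⟩

lemma disjoint_cthickening_compl_cthickening {ε ε' : ℝ} (hεε' : ε < ε') (hε' : 0 < ε')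
    (s : Set X) : Disjoint s (cthickening ε (cthickening ε' s)ᶜ) := by
  refine Set.disjoint_left.2 fun y hy hy' => ?_
  have hlt : infEDist y (cthickening ε' s)ᶜ < ENNReal.ofReal ε' :=
    (mem_cthickening_iff.1 hy').trans_lt ((ENNReal.ofReal_lt_ofReal_iff hε').2 hεε')
  obtain ⟨z, hz, hyz⟩ := infEDist_lt_iff.1 hlt
  refine hz (mem_cthickening_iff.2 ?_)
  calc infEDist z s ≤ edist z y := infEDist_le_edist_of_mem hy
    _ ≤ ENNReal.ofReal ε' := by rw [edist_comm]; exact hyz.le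

variable [MeasurableSpace X] [OpensMeasurableSpace X] {μ : Measure X} [IsProbabilityMeasure μ]

/-- Otherwise the complement `Z` of the `ε'`-expansion has mass at least `1 / 2`, while the
`ε`-expansion of `Z` misses `s`. -/
lemma half_le_measure_cthickening_of_concFn_lt {ε ε' : ℝ} (hεε' : ε < ε') (hε' : 0 < ε')
    {s : Set X} (hs : concFn μ ε < μ.real s) : 1 / 2 ≤ μ (cthickening ε' s) := by
  by_contra! hlt
  set Z := (cthickening ε' s)ᶜ
  have hZ : MeasurableSet Z := isClosed_cthickening.measurableSet.compl
  have hZ_half : 1 / 2 ≤ μ Z := by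
    rw [prob_compl_eq_one_sub isClosed_cthickening.measurableSet]
    calc 1 / 2 = (1 : ℝ≥0∞) - 1 / 2 := by rw [one_div, ENNReal.one_sub_inv_two]
      _ ≤ 1 - μ (cthickening ε' s) := tsub_le_tsub_left hlt.le 1
  have hconc := one_sub_concFn_le_measureReal_cthickening ε hZ hZ_half
  have hsum : μ.real s + μ.real (cthickening ε Z) ≤ 1 := by
    rw [← measureReal_union (disjoint_cthickening_compl_cthickening hεε' hε' s)
      isClosed_cthickening.measurableSet]
    exact measureReal_le_one
  linarith

/-- The margin `ε' > ε₁` needed in the first step is removed by letting the total radius decrease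
to `ε₁ + ε₂`. -/
lemma one_sub_concFn_le_measureReal_cthickening_add {ε₁ ε₂ : ℝ} (hε₁ : 0 ≤ ε₁) (hε₂ : 0 ≤ ε₂)
    {s : Set X} (hs : concFn μ ε₁ < μ.real s) :
    1 - concFn μ ε₂ ≤ μ.real (cthickening (ε₁ + ε₂) s) := by
  have hlim : Filter.Tendsto (fun r => μ (cthickening r s)) (𝓝[>] (ε₁ + ε₂))
      (𝓝 (μ (cthickening (ε₁ + ε₂) s))) := by
    rw [cthickening_eq_iInter_cthickening (δ := ε₁ + ε₂)]
    exact tendsto_measure_biInter_gt (fun _ _ => isClosed_cthickening.nullMeasurableSet)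
      (fun _ _ _ hij => cthickening_mono hij s) ⟨ε₁ + ε₂ + 1, by linarith, measure_ne_top μ _⟩
  have hbound : ∀ r, ε₁ + ε₂ < r → ENNReal.ofReal (1 - concFn μ ε₂) ≤ μ (cthickening r s) := by
    intro r hr
    have hhalf := half_le_measure_cthickening_of_concFn_lt (by linarith : ε₁ < r - ε₂)
      (by linarith) hs
    rw [ENNReal.ofReal_le_iff_le_toReal (measure_ne_top μ _)]
    calc 1 - concFn μ ε₂
        ≤ μ.real (cthickening ε₂ (cthickening (r - ε₂) s)) :=
          one_sub_concFn_le_measureReal_cthickening ε₂ isClosed_cthickening.measurableSet hhalf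
      _ ≤ μ.real (cthickening r s) := by
          refine measureReal_mono ((cthickening_cthickening_subset hε₂ (by linarith) s).trans ?_)
          rw [add_sub_cancel]
  exact (ENNReal.ofReal_le_iff_le_toReal (measure_ne_top μ _)).1
    (ge_of_tendsto hlim (eventually_nhdsWithin_of_forall hbound))

end Concentration

section LabelSplit

variable {X L : Type*} [MeasurableSpace X] [Countable L] {μ : Measure X} [IsProbabilityMeasure μ]
  {h : X → L}

lemma exists_finset_le_measureReal_preimage {c : ℝ} (hc : c < 1) :
    ∃ F : Finset L, c ≤ μ.real (h ⁻¹' F) := by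
  have hmono : Monotone fun F : Finset L => h ⁻¹' F :=
    fun F G hFG => Set.preimage_mono (Finset.coe_subset.2 hFG)
  have hunion : ⋃ F : Finset L, h ⁻¹' F = Set.univ :=
    Set.eq_univ_of_forall fun x => Set.mem_iUnion.2 ⟨{h x}, by simp⟩
  have hsup : ENNReal.ofReal c < ⨆ F : Finset L, μ (h ⁻¹' F) := by
    rw [← hmono.measure_iUnion, hunion, measure_univ]
    exact ENNReal.ofReal_lt_one.2 hc
  obtain ⟨F, hF⟩ := lt_iSup_iff.1 hsup
  exact ⟨F, (ENNReal.ofReal_le_iff_le_toReal (measure_ne_top μ _)).1 hF.le⟩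

/-- A minimal finite set of labels of mass at least `η / 2` has mass less than `η`, unless one
of its labels alone already has mass at least `η / 2`. -/
lemma exists_le_measureReal_preimage_and_preimage_compl
    (hmeas : ∀ l, MeasurableSet (h ⁻¹' {l})) {η : ℝ} (hη : η ≤ 1 / 2)
    (hfiber : ∀ l, μ.real (h ⁻¹' {l}) ≤ 1 - η) :
    ∃ t : Set L, η / 2 ≤ μ.real (h ⁻¹' t) ∧ η / 2 ≤ μ.real (h ⁻¹' tᶜ) := by
  classical
  have hcompl (t : Set L) : μ.real (h ⁻¹' tᶜ) = 1 - μ.real (h ⁻¹' t) := by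
    have ht : MeasurableSet (h ⁻¹' t) := by
      rw [← Set.biUnion_preimage_singleton]
      exact .biUnion t.to_countable fun l _ => hmeas l
    rw [Set.preimage_compl, measureReal_compl ht, probReal_univ]
  obtain ⟨F₀, hF₀⟩ := exists_finset_le_measureReal_preimage (μ := μ) (h := h)
    (by linarith : η / 2 < 1)
  obtain ⟨F, -, hFmin⟩ := exists_minimal_le_of_wellFoundedLT
    (fun F : Finset L => η / 2 ≤ μ.real (h ⁻¹' F)) F₀ hF₀
  rcases F.eq_empty_or_nonempty with rfl | ⟨l, hl⟩
  · refine ⟨↑(∅ : Finset L), hFmin.prop, ?_⟩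
    have hη_nonpos := hFmin.prop
    rw [hcompl]
    simp only [Finset.coe_empty, Set.preimage_empty, measureReal_empty] at hη_nonpos ⊢
    linarith
  have herase : μ.real (h ⁻¹' (F.erase l)) < η / 2 :=
    not_le.1 (hFmin.not_prop_of_lt (Finset.erase_ssubset hl))
  have hsplit : μ.real (h ⁻¹' F) ≤ μ.real (h ⁻¹' {l}) + μ.real (h ⁻¹' (F.erase l)) := by
    refine (measureReal_mono ?_).trans (measureReal_union_le _ _)
    rw [← Set.preimage_union]
    refine Set.preimage_mono fun y hy => ?_
    simp only [Set.mem_union, Set.mem_singleton_iff, Finset.coe_erase, Set.mem_sdiff]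
    tauto
  by_cases hl_heavy : η / 2 ≤ μ.real (h ⁻¹' {l})
  · have hl_le_one : μ.real (h ⁻¹' {l}) ≤ 1 := measureReal_le_one
    exact ⟨{l}, hl_heavy, by rw [hcompl]; linarith [hfiber l]⟩
  · exact ⟨F, hFmin.prop, by rw [hcompl]; linarith⟩

end LabelSplit

section PredictionChange

variable {X L : Type*} [PseudoMetricSpace X] {h : X → L}

lemma mem_pcSet_of_mem_cthickening {r : ℝ} (hr : 0 ≤ r) {x : X} {s : Set X}
    (hs : ∀ y ∈ s, h y ≠ h x) (hx : x ∈ cthickening r s) : x ∈ pcSet h r := by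
  have hne : s.Nonempty := Set.nonempty_iff_ne_empty.2 fun he => by simp [he] at hx
  have : Nonempty s := hne.to_subtype
  calc sInf {d | ∃ x', h x' ≠ h x ∧ d = dist x x'}
      ≤ infDist x s := by
        rw [infDist_eq_iInf]
        exact le_ciInf fun y => csInf_le ⟨0, by rintro _ ⟨_, -, rfl⟩; exact dist_nonneg⟩
          ⟨y, hs y y.2, rfl⟩
    _ ≤ r := ENNReal.toReal_le_of_le_ofReal hr (mem_cthickening_iff.1 hx)

lemma cthickening_preimage_inter_cthickening_preimage_compl_subset_pcSet {r : ℝ} (hr : 0 ≤ r)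
    (t : Set L) : cthickening r (h ⁻¹' t) ∩ cthickening r (h ⁻¹' tᶜ) ⊆ pcSet h r := by
  rintro x ⟨hx, hx'⟩
  by_cases hxt : h x ∈ t
  · exact mem_pcSet_of_mem_cthickening hr (fun _ hy hyx => absurd (hyx ▸ hxt) hy) hx'
  · exact mem_pcSet_of_mem_cthickening hr (fun _ hy hyx => hxt (hyx ▸ hy)) hx

end PredictionChange

/-- concentration of measure forces a large prediction-change
adversarial risk under `(ε₁ + ε₂)`-perturbations. -/
theorem stmt1 {X L : Type*} [MetricSpace X] [MeasurableSpace X] [BorelSpace X] [Countable L]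
    (μ : Measure X) [IsProbabilityMeasure μ]
    (h : X → L) (hmeas : ∀ l : L, MeasurableSet (h ⁻¹' {l}))
    (η γ ε₁ ε₂ : ℝ) (hη : η ∈ Set.Ioc (0 : ℝ) (1/2)) (hγ : γ ∈ Set.Ioc (0 : ℝ) 1)
    (hε₁ : 0 < ε₁) (hε₂ : 0 < ε₂)
    (hclass : ∀ l : L, μ (h ⁻¹' {l}) ≤ ENNReal.ofReal (1 - η))
    (hα₁ : concFn μ ε₁ < η / 2) (hα₂ : concFn μ ε₂ < γ / 2) :
    ENNReal.ofReal (1 - γ) < μ (pcSet h (ε₁ + ε₂)) := by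
  obtain ⟨t, ht, ht_compl⟩ := exists_le_measureReal_preimage_and_preimage_compl hmeas hη.2
    fun l => ENNReal.toReal_le_of_le_ofReal (by linarith [hη.2]) (hclass l)
  set A := cthickening (ε₁ + ε₂) (h ⁻¹' t)
  set B := cthickening (ε₁ + ε₂) (h ⁻¹' tᶜ)
  have hA := one_sub_concFn_le_measureReal_cthickening_add hε₁.le hε₂.le (hα₁.trans_le ht)
  have hB := one_sub_concFn_le_measureReal_cthickening_add hε₁.le hε₂.le (hα₁.trans_le ht_compl)
  have hAB : 1 - γ < μ.real (A ∩ B) := by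
    have hunion : μ.real (A ∪ B) + μ.real (A ∩ B) = μ.real A + μ.real B :=
      measureReal_union_add_inter isClosed_cthickening.measurableSet
    have hunion_le : μ.real (A ∪ B) ≤ 1 := measureReal_le_one
    linarith
  calc ENNReal.ofReal (1 - γ) < μ (A ∩ B) :=
        (ENNReal.ofReal_lt_iff_lt_toReal (by linarith [hγ.2]) (measure_ne_top μ _)).2 hAB
    _ ≤ μ (pcSet h (ε₁ + ε₂)) :=
        measure_mono (cthickening_preimage_inter_cthickening_preimage_compl_subset_pcSet
          (by positivity) t)

end
end

section
/- Let n ≥ 1 and let x_1, …, x_n be real numbers with x_i ∈ [0, π/2] for every i. Then ∏_{i=1}^n cos(x_i) ≤ cos^n( (∑_{i=1}^n x_i)/n ). -/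
/-!
By AM-GM, `∏ cos xᵢ ≤ ((∑ cos xᵢ) / n) ^ n`, and since `cos` is concave on `[0, π/2]`,
Jensen's inequality bounds the mean `(∑ cos xᵢ) / n` by `cos ((∑ xᵢ) / n)`.
-/

open Finset Real

theorem Real.prod_le_arith_mean_pow_card {ι : Type*} (t : Finset ι) (z : ι → ℝ)
    (hz : ∀ i ∈ t, 0 ≤ z i) : ∏ i ∈ t, z i ≤ ((∑ i ∈ t, z i) / #t) ^ #t := by
  rcases t.eq_empty_or_nonempty with rfl | ht
  · simp
  have hcard : (#t : ℝ) ≠ 0 := by positivity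
  have amgm := geom_mean_le_arith_mean_weighted t (fun _ ↦ (#t : ℝ)⁻¹) z
    (fun _ _ ↦ by positivity) (by simp [hcard]) hz
  rw [finsetProd_rpow t z hz, ← mul_sum, inv_mul_eq_div] at amgm
  calc ∏ i ∈ t, z i = ((∏ i ∈ t, z i) ^ (#t : ℝ)⁻¹) ^ #t :=
        (rpow_inv_natCast_pow (prod_nonneg hz) ht.card_pos.ne').symm
    _ ≤ ((∑ i ∈ t, z i) / #t) ^ #t :=
        pow_le_pow_left₀ (rpow_nonneg (prod_nonneg hz) _) amgm _

theorem ConcaveOn.arith_mean_le_map_arith_mean {ι : Type*} {s : Set ℝ} {f : ℝ → ℝ}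
    (hf : ConcaveOn ℝ s f) {t : Finset ι} (ht : t.Nonempty) {p : ι → ℝ}
    (hp : ∀ i ∈ t, p i ∈ s) : (∑ i ∈ t, f (p i)) / #t ≤ f ((∑ i ∈ t, p i) / #t) := by
  have hcard : (#t : ℝ) ≠ 0 := by positivity
  have jensen := hf.le_map_sum (w := fun _ ↦ (#t : ℝ)⁻¹) (fun _ _ ↦ by positivity)
    (by simp [hcard]) hp
  simp only [smul_eq_mul] at jensen
  rwa [← mul_sum, ← mul_sum, inv_mul_eq_div, inv_mul_eq_div] at jensen

theorem ConcaveOn.prod_le_map_arith_mean_pow_card {ι : Type*} {s : Set ℝ} {f : ℝ → ℝ}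
    (hf : ConcaveOn ℝ s f) (hf₀ : ∀ x ∈ s, 0 ≤ f x) (t : Finset ι) {p : ι → ℝ}
    (hp : ∀ i ∈ t, p i ∈ s) : ∏ i ∈ t, f (p i) ≤ f ((∑ i ∈ t, p i) / #t) ^ #t := by
  rcases t.eq_empty_or_nonempty with rfl | ht
  · simp
  have hfp : ∀ i ∈ t, 0 ≤ f (p i) := fun i hi ↦ hf₀ _ (hp i hi)
  calc ∏ i ∈ t, f (p i) ≤ ((∑ i ∈ t, f (p i)) / #t) ^ #t :=
        prod_le_arith_mean_pow_card t _ hfp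
    _ ≤ f ((∑ i ∈ t, p i) / #t) ^ #t := by
        gcongr
        · exact div_nonneg (sum_nonneg hfp) (Nat.cast_nonneg _)
        · exact hf.arith_mean_le_map_arith_mean ht hp

theorem Real.concaveOn_cos_Icc_zero_pi_div_two : ConcaveOn ℝ (Set.Icc 0 (π / 2)) cos :=
  strictConcaveOn_cos_Icc.concaveOn.subset
    (Set.Icc_subset_Icc (by linarith [pi_pos]) le_rfl) (convex_Icc _ _)

theorem stmt5_general (n : ℕ) (x : Fin n → ℝ)
    (hx : ∀ i, x i ∈ Set.Icc (0 : ℝ) (Real.pi / 2)) :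
    ∏ i, Real.cos (x i) ≤ Real.cos ((∑ i, x i) / n) ^ n := by
  have hcos₀ : ∀ y ∈ Set.Icc 0 (π / 2), 0 ≤ cos y := fun y hy ↦
    cos_nonneg_of_mem_Icc ⟨by linarith [pi_pos, hy.1], hy.2⟩
  simpa using concaveOn_cos_Icc_zero_pi_div_two.prod_le_map_arith_mean_pow_card hcos₀ univ
    (fun i _ ↦ hx i)

/-- `∏ cos(x_i) ≤ cos^n((∑ x_i)/n)` for `x_i ∈ [0, π/2]`. -/
theorem stmt5 (n : ℕ) (hn : 1 ≤ n) (x : Fin n → ℝ)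
    (hx : ∀ i, x i ∈ Set.Icc (0 : ℝ) (Real.pi / 2)) :
    ∏ i, Real.cos (x i) ≤ Real.cos ((∑ i, x i) / n) ^ n :=
  stmt5_general n x hx
end
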